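/- Let m ≥ 1 and let A, B ⊆ {1, …, m} with |A| = |B| = k. Define the sequence x̃ of length 2m + 1 by x̃_1 = 0 and, for each i ∈ {1, …, m}, x̃_{2i} = 2i if i ∈ A and x̃_{2i} = 0 otherwise, and x̃_{2i+1} = 2i − 1 if i ∈ B and x̃_{2i+1} = 0 otherwise. Then: if A ∩ B = ∅ one has lis(x̃) = 2k + 1, and if A ∩ B ≠ ∅ one has lis(x̃) ≤ 2k. -/

import Mathlib

/-!
Group the positions of `x̃` into the pairs `{2i, 2i+1}`, `i ∈ {1, …, m}`. A nonzero entry at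
such a pair equals `2i` or `2i - 1`, so `(x̃_j + 1) / 2` recovers the pair index `i` (and is `0`
for zero entries). Inside a pair the entry `2i` comes before the entry `2i - 1`, so an increasing
subsequence meets each pair at most once and contains at most one zero: the map
`j ↦ (x̃_j + 1) / 2` is injective on it, with values in `{0} ∪ A ∪ B`. Hence
`lis x̃ ≤ |A ∪ B| + 1`. When `A` and `B` are disjoint, the first entry together with all
nonzero entries is increasing and is mapped onto `{0} ∪ A ∪ B`, giving equality.
-/

/-- `lis x` is the maximum cardinality of an increasing subsequence of `x`. -/
def lis {N : ℕ} (x : Fin N → ℕ) : ℕ :=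
  Finset.sup (Finset.univ.filter fun T : Finset (Fin N) =>
    ∀ i ∈ T, ∀ j ∈ T, i < j → x i < x j) Finset.card

/-- The sequence `x̃` of length `2m+1` built from `A, B ⊆ {1,…,m}`:
`x̃_1 = 0`; for `i ∈ {1,…,m}`, `x̃_{2i} = 2i` if `i ∈ A` (else `0`) and
`x̃_{2i+1} = 2i−1` if `i ∈ B` (else `0`).  Here the `1`-indexed position of
`j : Fin (2m+1)` is `(j : ℕ) + 1`. -/
def xt (m : ℕ) (A B : Finset ℕ) : Fin (2 * m + 1) → ℕ :=
  fun j =>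
    let p := (j : ℕ) + 1
    if p = 1 then 0
    else if p % 2 = 0 then (if p / 2 ∈ A then p else 0)
    else (if (p - 1) / 2 ∈ B then p - 2 else 0)

open Finset

section Lis

variable {N : ℕ} {x : Fin N → ℕ}

lemma card_le_lis {T : Finset (Fin N)} (hT : StrictMonoOn x T) : #T ≤ lis x :=
  Finset.le_sup (mem_filter.2 ⟨mem_univ T, fun _ hi _ hj hij => hT hi hj hij⟩)

lemma lis_le {n : ℕ} (h : ∀ T : Finset (Fin N), StrictMonoOn x T → #T ≤ n) : lis x ≤ n :=
  Finset.sup_le fun T hT => h T fun _ hi _ hj hij => (mem_filter.1 hT).2 _ hi _ hj hij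

end Lis

section Reduction

variable {m : ℕ} {A B : Finset ℕ}

lemma xt_of_mem_left {i : ℕ} (hi : i ∈ A) {j : Fin (2 * m + 1)} (hj : (j : ℕ) + 1 = 2 * i) :
    xt m A B j = 2 * i := by
  simp only [xt, hj]
  rw [if_neg (by omega), if_pos (by omega), Nat.mul_div_cancel_left i two_pos, if_pos hi]

lemma xt_of_mem_right {i : ℕ} (hi : i ∈ B) (hi₁ : 1 ≤ i) {j : Fin (2 * m + 1)}
    (hj : (j : ℕ) = 2 * i) : xt m A B j = 2 * i - 1 := by
  simp only [xt, hj]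
  rw [if_neg (by omega), if_neg (by omega), show (2 * i + 1 - 1) / 2 = i by omega, if_pos hi]
  omega

lemma xt_cases (j : Fin (2 * m + 1)) :
    xt m A B j = 0 ∨
    (∃ i ∈ A, (j : ℕ) + 1 = 2 * i ∧ xt m A B j = 2 * i) ∨
    (∃ i ∈ B, 1 ≤ i ∧ (j : ℕ) = 2 * i ∧ xt m A B j = 2 * i - 1) := by
  by_cases hA : ((j : ℕ) + 1) % 2 = 0 ∧ ((j : ℕ) + 1) / 2 ∈ A
  · exact Or.inr (Or.inl ⟨_, hA.2, by omega, xt_of_mem_left hA.2 (by omega)⟩)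
  by_cases hB : (j : ℕ) ≠ 0 ∧ (j : ℕ) % 2 = 0 ∧ (j : ℕ) / 2 ∈ B
  · exact Or.inr (Or.inr ⟨_, hB.2.2, by omega, by omega, xt_of_mem_right hB.2.2 (by omega) (by omega)⟩)
  refine Or.inl ?_
  simp only [xt]
  split_ifs with h₁ h₂ h₃
  · rfl
  · exact absurd ⟨h₂, h₃⟩ hA
  · rfl
  · exact absurd ⟨by omega, by omega, by rwa [show (j : ℕ) = (j : ℕ) + 1 - 1 by omega]⟩ hB
  · rfl

variable (m A B) in
def xtBlock (j : Fin (2 * m + 1)) : ℕ := (xt m A B j + 1) / 2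

variable (m A B) in
def xtChain : Finset (Fin (2 * m + 1)) := {j | (j : ℕ) = 0 ∨ xt m A B j ≠ 0}

lemma xtBlock_mem (j : Fin (2 * m + 1)) : xtBlock m A B j ∈ insert 0 (A ∪ B) := by
  rcases xt_cases (A := A) (B := B) j with h | ⟨i, hi, -, h⟩ | ⟨i, hi, hi₁, -, h⟩
  all_goals simp only [xtBlock, h, mem_insert, mem_union]
  · simp
  · exact Or.inr (Or.inl (by rwa [show (2 * i + 1) / 2 = i by omega]))
  · exact Or.inr (Or.inr (by rwa [show (2 * i - 1 + 1) / 2 = i by omega]))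

lemma xtBlock_injOn {T : Finset (Fin (2 * m + 1))} (hT : StrictMonoOn (xt m A B) T) :
    Set.InjOn (xtBlock m A B) T := by
  have hne : ∀ a ∈ T, ∀ b ∈ T, a < b → xtBlock m A B a ≠ xtBlock m A B b := by
    intro a ha b hb hlt hab
    have hv := hT ha hb hlt
    have hlt' : (a : ℕ) < b := hlt
    simp only [xtBlock] at hab
    rcases xt_cases (A := A) (B := B) a with _ | ⟨_, -, _, _⟩ | ⟨_, -, _, _, _⟩ <;>
      rcases xt_cases (A := A) (B := B) b with _ | ⟨_, -, _, _⟩ | ⟨_, -, _, _, _⟩ <;>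
      omega
  intro a ha b hb hab
  rcases lt_trichotomy a b with h | h | h
  exacts [absurd hab (hne a ha b hb h), h, absurd hab.symm (hne b hb a ha h)]

lemma strictMonoOn_xtChain (hAB : Disjoint A B) :
    StrictMonoOn (xt m A B) (xtChain m A B : Set (Fin (2 * m + 1))) := by
  intro a ha b hb hlt
  have hlt' : (a : ℕ) < b := hlt
  simp only [xtChain, coe_filter, Set.mem_ofPred_eq] at ha hb
  rcases xt_cases (A := A) (B := B) a with _ | ⟨i, hiA, _, _⟩ | ⟨i, -, _, _, _⟩ <;>
    rcases xt_cases (A := A) (B := B) b with _ | ⟨i', -, _, _⟩ | ⟨i', hi'B, _, _, _⟩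
  -- the one case that needs disjointness: an `A`-entry followed by a `B`-entry
  case inr.inl.inr.inr =>
    have := disjoint_iff_ne.1 hAB i hiA i' hi'B
    omega
  all_goals omega

lemma insert_zero_union_subset_image_xtBlock (hA : A ⊆ Icc 1 m) (hB : B ⊆ Icc 1 m) :
    insert 0 (A ∪ B) ⊆ (xtChain m A B).image (xtBlock m A B) := by
  intro i hi
  simp only [mem_insert, mem_union] at hi
  rcases hi with rfl | hiA | hiB
  · exact mem_image.2 ⟨0, by simp [xtChain], by simp [xtBlock, xt]⟩
  · have hi := mem_Icc.1 (hA hiA)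
    have hv := xt_of_mem_left (m := m) (B := B) hiA (j := ⟨2 * i - 1, by omega⟩) (by simp only; omega)
    refine mem_image.2 ⟨⟨2 * i - 1, by omega⟩, ?_, ?_⟩
    · simp only [xtChain, mem_filter, mem_univ, true_and, hv]
      omega
    · simp only [xtBlock, hv]
      omega
  · have hi := mem_Icc.1 (hB hiB)
    have hv := xt_of_mem_right (m := m) (A := A) hiB hi.1 (j := ⟨2 * i, by omega⟩) rfl
    refine mem_image.2 ⟨⟨2 * i, by omega⟩, ?_, ?_⟩
    · simp only [xtChain, mem_filter, mem_univ, true_and, hv]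
      omega
    · simp only [xtBlock, hv]
      omega

lemma lis_xt_le : lis (xt m A B) ≤ #(A ∪ B) + 1 :=
  lis_le fun T hT => calc
    #T ≤ #(insert 0 (A ∪ B)) :=
      card_le_card_of_injOn _ (fun j _ => xtBlock_mem j) (xtBlock_injOn hT)
    _ ≤ #(A ∪ B) + 1 := card_insert_le _ _

lemma lis_xt_of_disjoint (hA : A ⊆ Icc 1 m) (hB : B ⊆ Icc 1 m) (hAB : Disjoint A B) :
    lis (xt m A B) = #(A ∪ B) + 1 := by
  refine le_antisymm lis_xt_le ?_
  have h0 : 0 ∉ A ∪ B := fun h => by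
    rcases mem_union.1 h with h | h
    exacts [by simpa using hA h, by simpa using hB h]
  calc #(A ∪ B) + 1 = #(insert 0 (A ∪ B)) := (card_insert_of_notMem h0).symm
    _ ≤ #((xtChain m A B).image (xtBlock m A B)) :=
      card_le_card (insert_zero_union_subset_image_xtBlock hA hB)
    _ ≤ #(xtChain m A B) := card_image_le
    _ ≤ lis (xt m A B) := card_le_lis (strictMonoOn_xtChain hAB)

end Reduction

theorem stmt8_general (m k : ℕ) (A B : Finset ℕ)
    (hA : A ⊆ Finset.Icc 1 m) (hB : B ⊆ Finset.Icc 1 m)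
    (hAk : A.card = k) (hBk : B.card = k) :
    (A ∩ B = ∅ → lis (xt m A B) = 2 * k + 1) ∧
    (A ∩ B ≠ ∅ → lis (xt m A B) ≤ 2 * k) := by
  refine ⟨fun hAB => ?_, fun hAB => ?_⟩
  · have hdisj := disjoint_iff_inter_eq_empty.2 hAB
    rw [lis_xt_of_disjoint hA hB hdisj, card_union_of_disjoint hdisj, hAk, hBk]
    ring
  · have hinter : 1 ≤ #(A ∩ B) := card_pos.2 (nonempty_iff_ne_empty.2 hAB)
    have := card_union_add_card_inter A B
    have := lis_xt_le (m := m) (A := A) (B := B)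
    omega

/-- Reduction from set-disjointness (proof of Theorem 1.6): for `k`-subsets
`A, B ⊆ {1,…,m}`, `lis(x̃) = 2k+1` if `A ∩ B = ∅`, and `lis(x̃) ≤ 2k`
otherwise. -/
theorem stmt8 (m k : ℕ) (hm : 1 ≤ m) (A B : Finset ℕ)
    (hA : A ⊆ Finset.Icc 1 m) (hB : B ⊆ Finset.Icc 1 m)
    (hAk : A.card = k) (hBk : B.card = k) :
    (A ∩ B = ∅ → lis (xt m A B) = 2 * k + 1) ∧
    (A ∩ B ≠ ∅ → lis (xt m A B) ≤ 2 * k) :=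
  stmt8_general m k A B hA hB hAk hBk
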